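/- arXiv:2204.02727 — 8 statements merged into one kernel-verified Lean document; each statement's English description precedes it below -/
import Mathlib

section
/- Let A be a nonnegative regular summability matrix and (X,d) a metric space. A sequence x = (x_k) in X is A-statistically convergent to L ∈ X if and only if there exists a set G = {q₁ < q₂ < q₃ < ...} ⊆ ℕ with δ_A(G) = 1 such that the subsequence (x_{q_n}) converges to L in the usual sense. -/
open Filter Topology

/-- `a` is a nonnegative regular summability matrix. -/
def IsRegularMatrix (a : ℕ → ℕ → ℝ) : Prop :=
  (∀ n k, 0 ≤ a n k) ∧
  (∀ n, Summable (a n)) ∧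
  (∃ C : ℝ, ∀ n, ∑' k, a n k ≤ C) ∧
  (∀ k, Tendsto (fun n => a n k) atTop (𝓝 0)) ∧
  Tendsto (fun n => ∑' k, a n k) atTop (𝓝 1)

/-- The set `B ⊆ ℕ` has `A`-density `d`: `lim_n Σ_{k ∈ B} a n k = d`. -/
def HasADensity (a : ℕ → ℕ → ℝ) (B : Set ℕ) (d : ℝ) : Prop :=
  Tendsto (fun n => ∑' k, Set.indicator B (a n) k) atTop (𝓝 d)

/-- `x` is `A`-statistically convergent to `L`. -/
def AStatTendsto {X : Type*} [MetricSpace X] (a : ℕ → ℕ → ℝ) (x : ℕ → X) (L : X) : Prop :=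
  ∀ ε > 0, HasADensity a {k | ε ≤ dist (x k) L} 0

/-- `x` is `A`-statistically Cauchy. -/
def AStatCauchy {X : Type*} [MetricSpace X] (a : ℕ → ℕ → ℝ) (x : ℕ → X) : Prop :=
  ∀ ε > 0, ∃ k₀ : ℕ, HasADensity a {k | ε ≤ dist (x k) (x k₀)} 0

/-- `p` is an `A`-statistical limit point of `x`: some subsequence of `x` indexed by an
(infinite) index set not having `A`-density zero converges to `p`. -/
def AStatLimitPt {X : Type*} [MetricSpace X] (a : ℕ → ℕ → ℝ) (x : ℕ → X) (p : X) : Prop :=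
  ∃ q : ℕ → ℕ, StrictMono q ∧ ¬ HasADensity a (Set.range q) 0 ∧
    Tendsto (fun n => x (q n)) atTop (𝓝 p)

/-- `p` is an `A`-statistical cluster point of `x`. -/
def AStatClusterPt {X : Type*} [MetricSpace X] (a : ℕ → ℕ → ℝ) (x : ℕ → X) (p : X) : Prop :=
  ∀ ε > 0, ¬ HasADensity a {k | dist (x k) p < ε} 0

/-- `p` is an ordinary limit point of the sequence `x`: some subsequence converges to `p`. -/
def OrdLimitPt {X : Type*} [MetricSpace X] (x : ℕ → X) (p : X) : Prop :=
  ∃ q : ℕ → ℕ, StrictMono q ∧ Tendsto (fun n => x (q n)) atTop (𝓝 p)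

/-- `x` is strongly `A`-summable to `L`: `lim_j Σ_k a j k * d(x k, L) = 0`. -/
def StrongASummable {X : Type*} [MetricSpace X] (a : ℕ → ℕ → ℝ) (x : ℕ → X) (L : X) : Prop :=
  Tendsto (fun j => ∑' k, a j k * dist (x k) L) atTop (𝓝 0)

/-!
The sets of `A`-density zero form a P-ideal: for an increasing sequence `T j` of such sets
there is one set `B` of `A`-density zero that contains each `T j` up to finitely many
elements. It is assembled as `B = ⋃ i, T i ∩ [N i, ∞)`, where `N i` is chosen so late that the
rows `n` on which `T i` is not yet small put almost no weight beyond `N i`; then on a row where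
`T j` is small, `B ⊆ T j ∪ [N j, ∞)` is small as well. Applied to
`T j = {k | 1/(j+1) ≤ d(x k, L)}`, the complement of `B` is the required index set. The
converse holds because the indices outside a density-one set, together with finitely many
more, have density zero.
-/

section Density

variable {a : ℕ → ℕ → ℝ}

lemma tsum_indicator_nonneg (h0 : ∀ n k, 0 ≤ a n k) (B : Set ℕ) (n : ℕ) :
    0 ≤ ∑' k, B.indicator (a n) k :=
  tsum_nonneg fun k => Set.indicator_nonneg (fun i _ => h0 n i) k

lemma tsum_indicator_mono (h0 : ∀ n k, 0 ≤ a n k) (hsum : ∀ n, Summable (a n))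
    {B C : Set ℕ} (hBC : B ⊆ C) (n : ℕ) :
    ∑' k, B.indicator (a n) k ≤ ∑' k, C.indicator (a n) k :=
  ((hsum n).indicator B).tsum_le_tsum
    (fun k => Set.indicator_le_indicator_of_subset hBC (h0 n) k) ((hsum n).indicator C)

lemma tsum_indicator_union_le (h0 : ∀ n k, 0 ≤ a n k) (hsum : ∀ n, Summable (a n))
    (B C : Set ℕ) (n : ℕ) :
    ∑' k, (B ∪ C).indicator (a n) k
      ≤ ∑' k, B.indicator (a n) k + ∑' k, C.indicator (a n) k := by
  rw [← ((hsum n).indicator B).tsum_add ((hsum n).indicator C)]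
  refine ((hsum n).indicator _).tsum_le_tsum (fun k => ?_)
    (((hsum n).indicator B).add ((hsum n).indicator C))
  have h := congrFun (Set.indicator_union_add_inter (a n) B C) k
  have h' := Set.indicator_nonneg (fun i _ => h0 n i) (s := B ∩ C) k
  simp only [Pi.add_apply] at h
  linarith

lemma tsum_indicator_add_compl (hsum : ∀ n, Summable (a n)) (B : Set ℕ) (n : ℕ) :
    ∑' k, B.indicator (a n) k + ∑' k, Bᶜ.indicator (a n) k = ∑' k, a n k := by
  rw [← ((hsum n).indicator B).tsum_add ((hsum n).indicator Bᶜ)]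
  exact tsum_congr fun k => congrFun (Set.indicator_self_add_compl B (a n)) k

lemma tendsto_tsum_indicator_Ici_zero (f : ℕ → ℝ) :
    Tendsto (fun M => ∑' k, (Set.Ici M).indicator f k) atTop (𝓝 0) := by
  have h := (tendsto_tsum_compl_atTop_zero f).comp tendsto_finset_range
  refine h.congr fun M => ?_
  rw [Function.comp_apply, ← tsum_subtype, ← Set.compl_Iio, ← Finset.coe_range]
  rfl

lemma hasADensity_zero_iff (h0 : ∀ n k, 0 ≤ a n k) {B : Set ℕ} :
    HasADensity a B 0 ↔ ∀ ε > 0, ∀ᶠ n in atTop, ∑' k, B.indicator (a n) k < ε := by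
  refine ⟨fun hB ε hε => hB.eventually_lt_const hε, fun hB => tendsto_order.2 ⟨?_, hB⟩⟩
  exact fun ε hε => Eventually.of_forall fun n => hε.trans_le (tsum_indicator_nonneg h0 B n)

lemma HasADensity.mono_zero (h0 : ∀ n k, 0 ≤ a n k) (hsum : ∀ n, Summable (a n))
    {B C : Set ℕ} (hBC : B ⊆ C) (hC : HasADensity a C 0) : HasADensity a B 0 :=
  squeeze_zero (tsum_indicator_nonneg h0 B) (tsum_indicator_mono h0 hsum hBC) hC

lemma HasADensity.union_zero (h0 : ∀ n k, 0 ≤ a n k) (hsum : ∀ n, Summable (a n))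
    {B C : Set ℕ} (hB : HasADensity a B 0) (hC : HasADensity a C 0) :
    HasADensity a (B ∪ C) 0 :=
  squeeze_zero (tsum_indicator_nonneg h0 _) (tsum_indicator_union_le h0 hsum B C)
    (by simpa using hB.add hC)

lemma hasADensity_zero_of_finite (hcol : ∀ k, Tendsto (fun n => a n k) atTop (𝓝 0))
    {B : Set ℕ} (hB : B.Finite) : HasADensity a B 0 := by
  rw [← hB.coe_toFinset]
  have h := tendsto_finsetSum hB.toFinset fun k _ => hcol k
  rw [Finset.sum_const_zero] at h
  refine h.congr fun n => ?_
  rw [← tsum_subtype]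
  exact (Finset.tsum_subtype _ _).symm

lemma hasADensity_one_iff_compl (hsum : ∀ n, Summable (a n))
    (htot : Tendsto (fun n => ∑' k, a n k) atTop (𝓝 1)) {B : Set ℕ} :
    HasADensity a B 1 ↔ HasADensity a Bᶜ 0 := by
  have hB : ∀ n, ∑' k, B.indicator (a n) k = ∑' k, a n k - ∑' k, Bᶜ.indicator (a n) k :=
    fun n => eq_sub_of_add_eq (tsum_indicator_add_compl hsum B n)
  have hBc : ∀ n, ∑' k, Bᶜ.indicator (a n) k = ∑' k, a n k - ∑' k, B.indicator (a n) k :=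
    fun n => eq_sub_of_add_eq' (tsum_indicator_add_compl hsum B n)
  constructor
  · intro h
    simpa [HasADensity, hBc] using htot.sub h
  · intro h
    simpa [HasADensity, hB] using htot.sub h

lemma HasADensity.infinite_of_one (hcol : ∀ k, Tendsto (fun n => a n k) atTop (𝓝 0))
    {B : Set ℕ} (hB : HasADensity a B 1) : B.Infinite :=
  fun hfin => one_ne_zero (tendsto_nhds_unique hB (hasADensity_zero_of_finite hcol hfin))

lemma hasADensity_zero_of_subset_union_Ici (h0 : ∀ n k, 0 ≤ a n k)
    (hsum : ∀ n, Summable (a n)) {B : Set ℕ} {T : ℕ → Set ℕ} {N r : ℕ → ℕ}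
    (hr : StrictMono r) (hB : ∀ j, B ⊆ T j ∪ Set.Ici (N j))
    (hT : ∀ j, ∀ n ≥ r j, ∑' k, (T j).indicator (a n) k < 1 / ((j : ℝ) + 1))
    (hN : ∀ j, ∀ n < r (j + 1),
      ∑' k, (Set.Ici (N j)).indicator (a n) k < 1 / ((j : ℝ) + 1)) :
    HasADensity a B 0 := by
  rw [hasADensity_zero_iff h0]
  intro ε hε
  obtain ⟨j, hj⟩ := exists_nat_one_div_lt (half_pos hε)
  filter_upwards [eventually_ge_atTop (r j)] with n hn
  obtain ⟨i, hin, hni⟩ := hr.exists_between_of_tendsto_atTop hr.tendsto_atTop (x := n + 1)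
    (Nat.lt_succ_of_le ((hr.monotone (Nat.zero_le j)).trans hn))
  have hji : j ≤ i := Nat.lt_succ_iff.1 (hr.lt_iff_lt.1 (hn.trans_lt hni))
  have hij : (1 : ℝ) / ((i : ℝ) + 1) ≤ 1 / ((j : ℝ) + 1) := Nat.one_div_le_one_div hji
  calc ∑' k, B.indicator (a n) k
      ≤ ∑' k, (T i).indicator (a n) k + ∑' k, (Set.Ici (N i)).indicator (a n) k :=
        (tsum_indicator_mono h0 hsum (hB i) n).trans (tsum_indicator_union_le h0 hsum _ _ n)
    _ < 1 / ((i : ℝ) + 1) + 1 / ((i : ℝ) + 1) :=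
        add_lt_add (hT i n (Nat.lt_succ_iff.1 hin)) (hN i n hni)
    _ < ε := by linarith

lemma exists_hasADensity_zero_forall_diff_finite (h0 : ∀ n k, 0 ≤ a n k)
    (hsum : ∀ n, Summable (a n)) {T : ℕ → Set ℕ} (hT : Monotone T)
    (hT0 : ∀ j, HasADensity a (T j) 0) :
    ∃ B, HasADensity a B 0 ∧ ∀ j, (T j \ B).Finite := by
  obtain ⟨r, hr, hrT⟩ : ∃ r : ℕ → ℕ, StrictMono r ∧
      ∀ j, ∀ n ≥ r j, ∑' k, (T j).indicator (a n) k < 1 / ((j : ℝ) + 1) :=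
    extraction_forall_of_eventually fun j => eventually_forall_ge_atTop.2
      ((hT0 j).eventually_lt_const Nat.one_div_pos_of_nat)
  obtain ⟨N, hN, hNr⟩ : ∃ N : ℕ → ℕ, StrictMono N ∧
      ∀ j, ∀ n < r (j + 1), ∑' k, (Set.Ici (N j)).indicator (a n) k < 1 / ((j : ℝ) + 1) :=
    extraction_forall_of_eventually fun j => (eventually_all_finite (Set.finite_Iio _)).2
      fun n _ => (tendsto_tsum_indicator_Ici_zero (a n)).eventually_lt_const
        Nat.one_div_pos_of_nat
  refine ⟨⋃ i, T i ∩ Set.Ici (N i),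
    hasADensity_zero_of_subset_union_Ici h0 hsum hr (fun j => ?_) hrT hNr, fun j => ?_⟩
  · intro k hk
    obtain ⟨i, hki, hNik⟩ := Set.mem_iUnion.1 hk
    rcases le_total i j with hij | hji
    · exact Or.inl (hT hij hki)
    · exact Or.inr ((hN.monotone hji).trans hNik)
  · refine (Set.finite_Iio (N j)).subset fun k ⟨hk, hkB⟩ => ?_
    by_contra hNk
    exact hkB (Set.mem_iUnion.2 ⟨j, hk, Set.mem_Ici.2 (not_lt.1 hNk)⟩)

end Density

lemma tendsto_comp_iff_forall_finite_inter_range {X : Type*} [PseudoMetricSpace X]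
    {x : ℕ → X} {L : X} {q : ℕ → ℕ} (hq : q.Injective) :
    Tendsto (fun n => x (q n)) atTop (𝓝 L) ↔
      ∀ ε > 0, ({k | ε ≤ dist (x k) L} ∩ Set.range q).Finite := by
  rw [Metric.tendsto_nhds, ← Nat.cofinite_eq_atTop]
  refine forall₂_congr fun ε _ => ?_
  rw [eventually_cofinite, ← Set.image_preimage_eq_inter_range, Set.finite_image_iff hq.injOn]
  simp only [not_lt]
  rfl

theorem stmt3 {X : Type*} [MetricSpace X] {a : ℕ → ℕ → ℝ} (hA : IsRegularMatrix a)
    {x : ℕ → X} {L : X} :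
    AStatTendsto a x L ↔
      ∃ q : ℕ → ℕ, StrictMono q ∧ HasADensity a (Set.range q) 1 ∧
        Filter.Tendsto (fun n => x (q n)) Filter.atTop (𝓝 L) := by
  obtain ⟨h0, hsum, -, hcol, htot⟩ := hA
  constructor
  · intro hx
    obtain ⟨B, hB, hTB⟩ := exists_hasADensity_zero_forall_diff_finite h0 hsum
      (T := fun j => {k | 1 / ((j : ℝ) + 1) ≤ dist (x k) L})
      (fun i j hij => Set.ofPred_subset_ofPred.2 fun k => (Nat.one_div_le_one_div hij).trans)
      (fun j => hx _ Nat.one_div_pos_of_nat)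
    have hG : HasADensity a Bᶜ 1 := (hasADensity_one_iff_compl hsum htot).2 (by rwa [compl_compl])
    have hGinf : (Set.ofPred (· ∈ Bᶜ)).Infinite := hG.infinite_of_one hcol
    refine ⟨Nat.nth (· ∈ Bᶜ), Nat.nth_strictMono hGinf, ?_, ?_⟩
    · rwa [Nat.range_nth_of_infinite hGinf]
    · rw [tendsto_comp_iff_forall_finite_inter_range (Nat.nth_strictMono hGinf).injective,
        Nat.range_nth_of_infinite hGinf]
      intro ε hε
      obtain ⟨j, hj⟩ := exists_nat_one_div_lt hε
      exact (hTB j).subset fun k ⟨hk, hkB⟩ => ⟨hj.le.trans hk, hkB⟩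
  · rintro ⟨q, hq, hq1, hxq⟩ ε hε
    rw [tendsto_comp_iff_forall_finite_inter_range hq.injective] at hxq
    refine HasADensity.mono_zero h0 hsum (fun k hk => ?_)
      (((hasADensity_one_iff_compl hsum htot).1 hq1).union_zero h0 hsum
        (hasADensity_zero_of_finite hcol (hxq ε hε)))
    by_cases hkq : k ∈ Set.range q
    · exact Or.inr ⟨hk, hkq⟩
    · exact Or.inl hkq
end

section
/- Let A be a nonnegative regular summability matrix and (X,d) a metric space. A sequence x = (x_k) in X is A-statistically convergent to L ∈ X if and only if there exists a sequence (g_k) in X such that δ_A({k ∈ ℕ : x_k ≠ g_k}) = 0 and (g_k) converges to L in the usual sense. -/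
open Filter Topology

section auxlemmas


variable {a : ℕ → ℕ → ℝ}

private lemma aux_nonneg {f : ℕ → ℝ} (ha : ∀ k, 0 ≤ f k) (B : Set ℕ) :
    0 ≤ ∑' k, B.indicator f k :=
  tsum_nonneg fun k => Set.indicator_nonneg (fun k _ => ha k) k

private lemma aux_mono {f : ℕ → ℝ} (ha : ∀ k, 0 ≤ f k) (hs : Summable f) {B C : Set ℕ}
    (h : B ⊆ C) : ∑' k, B.indicator f k ≤ ∑' k, C.indicator f k :=
  Summable.tsum_le_tsum (fun k => Set.indicator_le_indicator_of_subset h (fun _ => ha _) k)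
    (hs.indicator B) (hs.indicator C)

private lemma aux_subadd {f : ℕ → ℝ} (ha : ∀ k, 0 ≤ f k) (hs : Summable f) (B C : Set ℕ) :
    ∑' k, (B ∪ C).indicator f k ≤ (∑' k, B.indicator f k) + ∑' k, C.indicator f k := by
  rw [← Summable.tsum_add (hs.indicator B) (hs.indicator C)]
  refine Summable.tsum_le_tsum (fun k => ?_) (hs.indicator _) ((hs.indicator B).add (hs.indicator C))
  by_cases hB : k ∈ B <;> by_cases hC : k ∈ C <;>
    simp [Set.indicator, hB, hC, ha k, le_add_iff_nonneg_left, le_add_iff_nonneg_right]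

private lemma dens_subset (hA : IsRegularMatrix a) {B C : Set ℕ} (h : B ⊆ C)
    (hC : HasADensity a C 0) : HasADensity a B 0 :=
  squeeze_zero (fun n => aux_nonneg (hA.1 n) B) (fun n => aux_mono (hA.1 n) (hA.2.1 n) h) hC

private lemma dens_union (hA : IsRegularMatrix a) {B C : Set ℕ}
    (hB : HasADensity a B 0) (hC : HasADensity a C 0) : HasADensity a (B ∪ C) 0 :=
  squeeze_zero (fun n => aux_nonneg (hA.1 n) _)
    (fun n => aux_subadd (hA.1 n) (hA.2.1 n) B C) (by simpa using hB.add hC)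

private lemma dens_finite (hA : IsRegularMatrix a) {B : Set ℕ} (hB : B.Finite) :
    HasADensity a B 0 := by
  have key : ∀ n, ∑' k, B.indicator (a n) k = ∑ k ∈ hB.toFinset, B.indicator (a n) k :=
    fun n => tsum_eq_sum (fun b hb => Set.indicator_of_notMem (by simpa using hb) _)
  unfold HasADensity
  simp_rw [key]
  have h0 : (0 : ℝ) = ∑ k ∈ hB.toFinset, (0 : ℝ) := by simp
  rw [h0]
  refine tendsto_finset_sum _ (fun k hk => ?_)
  have hkB : k ∈ B := hB.mem_toFinset.mp hk
  simpa [Set.indicator_of_mem hkB] using hA.2.2.2.1 k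

private lemma tail_tendsto {f : ℕ → ℝ} (hs : Summable f) :
    Tendsto (fun v => ∑' k, ({k | v ≤ k} : Set ℕ).indicator f k) atTop (𝓝 0) := by
  have key : ∀ v, ∑' k, ({k | v ≤ k} : Set ℕ).indicator f k
      = (∑' k, f k) - ∑ k ∈ Finset.range v, f k := by
    intro v
    have h1 : ∑' k, ({k | k < v} : Set ℕ).indicator f k = ∑ k ∈ Finset.range v, f k := by
      rw [tsum_eq_sum (s := Finset.range v)
        (fun b hb => Set.indicator_of_notMem (by simpa using hb) _)]
      exact Finset.sum_congr rfl fun k hk => Set.indicator_of_mem (by simpa using hk) _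
    have h3 : (∑' k, ({k | v ≤ k} : Set ℕ).indicator f k)
        + ∑' k, ({k | k < v} : Set ℕ).indicator f k = ∑' k, f k := by
      rw [← Summable.tsum_add (hs.indicator _) (hs.indicator _)]
      refine tsum_congr fun k => ?_
      by_cases h : v ≤ k
      · simp [Set.indicator, h, Nat.not_lt.mpr h]
      · simp [Set.indicator, h, Nat.lt_of_not_le h]
    linarith
  simp_rw [key]
  have h2 := hs.hasSum.tendsto_sum_nat
  have h3 : Tendsto (fun v => (∑' k, f k) - ∑ k ∈ Finset.range v, f k) atTop
      (𝓝 ((∑' k, f k) - ∑' k, f k)) := tendsto_const_nhds.sub h2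
  simpa using h3

end auxlemmas


theorem stmt4 {X : Type*} [MetricSpace X] {a : ℕ → ℕ → ℝ} (hA : IsRegularMatrix a)
    {x : ℕ → X} {L : X} :
    AStatTendsto a x L ↔
      ∃ g : ℕ → X, HasADensity a {k | x k ≠ g k} 0 ∧
        Filter.Tendsto g Filter.atTop (𝓝 L) := by
  classical
  obtain ⟨ha, hs, -, hcol, -⟩ := id hA
  constructor
  · intro h
    set T : ℕ → Set ℕ := fun j => {k | 1 / (j + 1 : ℝ) ≤ dist (x k) L} with hTdef
    have hTd : ∀ j, HasADensity a (T j) 0 := fun j => h _ (by positivity)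
    have hTmono : ∀ i j : ℕ, i ≤ j → T i ⊆ T j := by
      intro i j hij k hk
      simp only [hTdef, Set.mem_setOf_eq] at hk ⊢
      refine le_trans ?_ hk
      exact one_div_le_one_div_of_le (by positivity) (by exact_mod_cast Nat.succ_le_succ hij)
    -- choose row thresholds
    have hr0 : ∀ j : ℕ, ∃ r : ℕ, ∀ n ≥ r, ∑' k, (T j).indicator (a n) k < 1 / (j + 1 : ℝ) := by
      intro j
      have := (hTd j).eventually (gt_mem_nhds (show (0:ℝ) < 1 / (j+1) by positivity))
      obtain ⟨N, hN⟩ := eventually_atTop.mp this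
      exact ⟨N, fun n hn => hN n hn⟩
    choose r0 hr0 using hr0
    set r : ℕ → ℕ := fun j => j + (Finset.range (j + 1)).sup r0 with hrdef
    have hrge : ∀ j, j ≤ r j := fun j => Nat.le_add_right _ _
    have hrmono : Monotone r := by
      intro i j hij
      have : (Finset.range (i + 1)).sup r0 ≤ (Finset.range (j + 1)).sup r0 :=
        Finset.sup_mono (Finset.range_subset_range.mpr (by omega))
      simp only [hrdef]; omega
    have hr1 : ∀ j, ∀ n, r j ≤ n → ∑' k, (T j).indicator (a n) k < 1 / (j + 1 : ℝ) := by
      intro j n hn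
      refine hr0 j n ?_
      have : r0 j ≤ (Finset.range (j + 1)).sup r0 := Finset.le_sup (by simp)
      simp only [hrdef] at hn; omega
    -- choose column cutoffs
    have hw0 : ∀ j n : ℕ, ∃ w, ∀ v ≥ w,
        ∑' k, ({k | v ≤ k} : Set ℕ).indicator (a n) k < 1 / (j + 1 : ℝ) := by
      intro j n
      have := (tail_tendsto (hs n)).eventually
        (gt_mem_nhds (show (0:ℝ) < 1 / (j+1) by positivity))
      obtain ⟨N, hN⟩ := eventually_atTop.mp this
      exact ⟨N, fun v hv => hN v hv⟩
    choose w0 hw0 using hw0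
    set W : ℕ → ℕ := fun i => (Finset.range (r (i + 1) + 1)).sup (w0 i) with hWdef
    set v : ℕ → ℕ := fun j => j * (1 + (Finset.range (j + 1)).sup W) with hvdef
    have hv0 : v 0 = 0 := by simp [hvdef]
    have hvmono : Monotone v := by
      intro i j hij
      have h1 : (Finset.range (i + 1)).sup W ≤ (Finset.range (j + 1)).sup W :=
        Finset.sup_mono (Finset.range_subset_range.mpr (by omega))
      calc v i = i * (1 + (Finset.range (i + 1)).sup W) := rfl
        _ ≤ j * (1 + (Finset.range (j + 1)).sup W) := Nat.mul_le_mul hij (by omega)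
    have hvge : ∀ j, j ≤ v j := by
      intro j
      calc j = j * 1 := (Nat.mul_one j).symm
        _ ≤ v j := Nat.mul_le_mul_left j (by omega)
    have hv1 : ∀ j n : ℕ, n ≤ r (j + 2) →
        ∑' k, ({k | v (j + 1) ≤ k} : Set ℕ).indicator (a n) k < 1 / (j + 2 : ℝ) := by
      intro j n hn
      have h2 : w0 (j + 1) n ≤ W (j + 1) :=
        Finset.le_sup (Finset.mem_range.mpr (Nat.lt_succ_of_le hn))
      have h3 : W (j + 1) ≤ (Finset.range (j + 2)).sup W := Finset.le_sup (by simp)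
      have h4 : w0 (j + 1) n ≤ v (j + 1) := by
        have : (Finset.range (j + 2)).sup W ≤ v (j + 1) := by
          calc (Finset.range (j + 2)).sup W ≤ 1 + (Finset.range (j + 2)).sup W := by omega
            _ ≤ (j + 1) * (1 + (Finset.range (j + 2)).sup W) :=
              Nat.le_mul_of_pos_left _ (by omega)
        omega
      calc ∑' k, ({k | v (j + 1) ≤ k} : Set ℕ).indicator (a n) k
          < 1 / ((j + 1 : ℕ) + 1 : ℝ) := hw0 (j + 1) n (v (j + 1)) h4
        _ = 1 / (j + 2 : ℝ) := by push_cast; ring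
    -- the index function and modified sequence
    set J : ℕ → ℕ := fun k => Nat.findGreatest (fun j => v j ≤ k) k with hJdef
    have hJspec : ∀ k, v (J k) ≤ k := fun k =>
      Nat.findGreatest_spec (P := fun j => v j ≤ k) (Nat.zero_le k) (by omega)
    have hJge : ∀ j k, v j ≤ k → j ≤ J k := fun j k hjk =>
      Nat.le_findGreatest (le_trans (hvge j) hjk) hjk
    set g : ℕ → X := fun k => if dist (x k) L < 1 / (J k + 1 : ℝ) then x k else L with hgdef
    set D : Set ℕ := {k | 1 / (J k + 1 : ℝ) ≤ dist (x k) L} with hDdef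
    have hgD : {k | x k ≠ g k} ⊆ D := by
      intro k hk
      by_cases hd : dist (x k) L < 1 / (J k + 1 : ℝ)
      · exfalso
        apply hk
        simp only [hgdef]
        rw [if_pos hd]
      · exact not_lt.mp hd
    have hDsub : ∀ j : ℕ, D ⊆ T j ∪ {k | v (j + 1) ≤ k} := by
      intro j k hk
      by_cases hJk : J k ≤ j
      · left
        simp only [hTdef, Set.mem_setOf_eq]
        simp only [hDdef, Set.mem_setOf_eq] at hk
        refine le_trans ?_ hk
        exact one_div_le_one_div_of_le (by positivity) (by exact_mod_cast Nat.succ_le_succ hJk)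
      · right
        push_neg at hJk
        exact le_trans (hvmono hJk) (hJspec k)
    have hDd : HasADensity a D 0 := by
      rw [HasADensity, Metric.tendsto_atTop]
      intro ε hε
      obtain ⟨j, hj⟩ := exists_nat_one_div_lt (half_pos hε)
      refine ⟨r (j + 1), fun n hn => ?_⟩
      set m := Nat.findGreatest (fun m => r (m + 1) ≤ n) n with hmdef
      have hjn : j ≤ n := le_trans (by have := hrge (j + 1); omega) hn
      have hjm : j ≤ m := Nat.le_findGreatest hjn hn
      have hm1 : r (m + 1) ≤ n := Nat.findGreatest_spec (P := fun m => r (m + 1) ≤ n) hjn hn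
      have hm2 : n < r (m + 2) := by
        by_contra hcon
        push_neg at hcon
        have h5 : m + 1 ≤ n := by have := hrge (m + 2); omega
        exact Nat.findGreatest_is_greatest (P := fun m => r (m + 1) ≤ n) (k := m + 1)
          (by omega) h5 hcon
      have hb1 : ∑' k, D.indicator (a n) k
          ≤ (∑' k, (T m).indicator (a n) k)
            + ∑' k, ({k | v (m + 1) ≤ k} : Set ℕ).indicator (a n) k :=
        le_trans (aux_mono (ha n) (hs n) (hDsub m)) (aux_subadd (ha n) (hs n) _ _)
      have hb2 : ∑' k, (T m).indicator (a n) k < 1 / (m + 1 : ℝ) :=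
        hr1 m n (le_trans (hrmono (by omega)) hm1)
      have hb3 : ∑' k, ({k | v (m + 1) ≤ k} : Set ℕ).indicator (a n) k < 1 / (m + 2 : ℝ) :=
        hv1 m n (by omega)
      have hle1 : (1 : ℝ) / (m + 1) ≤ 1 / (j + 1) :=
        one_div_le_one_div_of_le (by positivity) (by exact_mod_cast Nat.succ_le_succ hjm)
      have hle2 : (1 : ℝ) / (m + 2) ≤ 1 / (j + 1) := by
        refine one_div_le_one_div_of_le (by positivity) ?_
        have : (j : ℝ) + 1 ≤ m + 1 := by exact_mod_cast Nat.succ_le_succ hjm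
        linarith
      rw [Real.dist_eq, sub_zero, abs_of_nonneg (aux_nonneg (ha n) D)]
      linarith
    refine ⟨g, dens_subset hA hgD hDd, ?_⟩
    rw [Metric.tendsto_atTop]
    intro ε hε
    obtain ⟨j, hj⟩ := exists_nat_one_div_lt hε
    refine ⟨v j, fun k hk => ?_⟩
    have hJk : j ≤ J k := hJge j k hk
    by_cases hd : dist (x k) L < 1 / (J k + 1 : ℝ)
    · have heq : g k = x k := by simp only [hgdef]; rw [if_pos hd]
      rw [heq]
      calc dist (x k) L < 1 / (J k + 1 : ℝ) := hd
        _ ≤ 1 / (j + 1 : ℝ) :=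
          one_div_le_one_div_of_le (by positivity) (by exact_mod_cast Nat.succ_le_succ hJk)
        _ < ε := hj
    · have heq : g k = L := by simp only [hgdef]; rw [if_neg hd]
      rw [heq, dist_self]
      exact hε
  · rintro ⟨g, hDg, hgL⟩ ε hε
    obtain ⟨N, hN⟩ := Metric.tendsto_atTop.mp hgL ε hε
    have hsub : {k | ε ≤ dist (x k) L} ⊆ {k | x k ≠ g k} ∪ Set.Iio N := by
      intro k hk
      by_cases h1 : x k = g k
      · right
        by_contra h2
        simp only [Set.mem_Iio, not_lt] at h2
        have := hN k h2
        simp only [Set.mem_setOf_eq] at hk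
        rw [h1] at hk
        exact absurd hk (not_le.mpr this)
      · left; exact h1
    exact dens_subset hA hsub (dens_union hA hDg (dens_finite hA (Set.finite_Iio N)))
end

section
/- Let A be a nonnegative regular summability matrix, (X,ρ) a metric space, and x = (x_k) a sequence in X. The following three statements are equivalent: (1) x is A-statistically Cauchy; (2) for every γ > 0 there exists a set M ⊆ ℕ with δ_A(M) = 0 such that ρ(x_m, x_n) < γ for all m, n ∉ M; (3) for every γ > 0, δ_A({j ∈ ℕ : the set D_j(γ) = {k ∈ ℕ : ρ(x_k, x_j) ≥ γ} does not have A-density zero}) = 0. -/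
open Filter Topology

lemma dens_mono {a : ℕ → ℕ → ℝ} (hA : IsRegularMatrix a) {B C : Set ℕ} (hBC : B ⊆ C)
    (hC : HasADensity a C 0) : HasADensity a B 0 := by
  obtain ⟨hpos, hsum, -⟩ := hA
  refine tendsto_of_tendsto_of_tendsto_of_le_of_le tendsto_const_nhds hC ?_ ?_
  · intro n
    exact tsum_nonneg fun k => Set.indicator_nonneg (fun k _ => hpos n k) k
  · intro n
    refine Summable.tsum_le_tsum ?_ ((hsum n).indicator B) ((hsum n).indicator C)
    intro k
    exact Set.indicator_le_indicator_of_subset hBC (fun k => hpos n k) k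

lemma dens_exists_compl {a : ℕ → ℕ → ℝ} (hA : IsRegularMatrix a) {M : Set ℕ}
    (hM : HasADensity a M 0) : ∃ k₀, k₀ ∉ M := by
  by_contra h
  push_neg at h
  have hMuniv : M = Set.univ := Set.eq_univ_of_forall h
  rw [hMuniv] at hM
  unfold HasADensity at hM
  simp only [Set.indicator_univ] at hM
  have := tendsto_nhds_unique hM hA.2.2.2.2
  norm_num at this

theorem stmt5 {X : Type*} [MetricSpace X] {a : ℕ → ℕ → ℝ} (hA : IsRegularMatrix a)
    (x : ℕ → X) :
    (AStatCauchy a x ↔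
      ∀ γ > (0:ℝ), ∃ M : Set ℕ, HasADensity a M 0 ∧
        ∀ m ∉ M, ∀ n ∉ M, dist (x m) (x n) < γ) ∧
    (AStatCauchy a x ↔
      ∀ γ > (0:ℝ), HasADensity a
        {j | ¬ HasADensity a {k | γ ≤ dist (x k) (x j)} 0} 0) := by
  constructor
  · constructor
    · intro h γ hγ
      obtain ⟨k₀, hk₀⟩ := h (γ/2) (by linarith)
      refine ⟨_, hk₀, ?_⟩
      intro m hm n hn
      simp only [Set.mem_setOf_eq, not_le] at hm hn
      calc dist (x m) (x n) ≤ dist (x m) (x k₀) + dist (x n) (x k₀) := dist_triangle_right _ _ _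
        _ < γ/2 + γ/2 := by linarith
        _ = γ := by ring
    · intro h ε hε
      obtain ⟨M, hM, hMs⟩ := h ε hε
      obtain ⟨k₀, hk₀⟩ := dens_exists_compl hA hM
      refine ⟨k₀, dens_mono hA ?_ hM⟩
      intro k hk
      by_contra hkM
      exact absurd (hMs k hkM k₀ hk₀) (not_lt.mpr hk)
  · constructor
    · intro h γ hγ
      obtain ⟨k₀, hk₀⟩ := h (γ/2) (by linarith)
      refine dens_mono hA ?_ hk₀
      intro j hj
      simp only [Set.mem_setOf_eq] at hj ⊢
      by_contra hjD
      push_neg at hjD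
      apply hj
      refine dens_mono hA ?_ hk₀
      intro k hk
      simp only [Set.mem_setOf_eq] at hk ⊢
      have h1 := dist_triangle (x k) (x k₀) (x j)
      have h2 : dist (x k₀) (x j) = dist (x j) (x k₀) := dist_comm _ _
      linarith
    · intro h ε hε
      have hS := h ε hε
      obtain ⟨k₀, hk₀⟩ := dens_exists_compl hA hS
      simp only [Set.mem_setOf_eq, not_not] at hk₀
      exact ⟨k₀, hk₀⟩
end

section
/- Let A be a nonnegative regular summability matrix and (X,d) a metric space. If a sequence x = (x_k) in X is A-statistically Cauchy, then for every t > 0 there exists a set P_t ⊆ ℕ with δ_A(P_t) = 0 such that d(x_m, x_j) < t for all m, j ∉ P_t. -/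
open Filter Topology

theorem stmt7 {X : Type*} [MetricSpace X] {a : ℕ → ℕ → ℝ} (hA : IsRegularMatrix a)
    {x : ℕ → X} (h : AStatCauchy a x) :
    ∀ t > (0:ℝ), ∃ P : Set ℕ, HasADensity a P 0 ∧
      ∀ m ∉ P, ∀ j ∉ P, dist (x m) (x j) < t := by
  intro t ht
  obtain ⟨k₀, hk₀⟩ := h (t/2) (by linarith)
  refine ⟨{k | t/2 ≤ dist (x k) (x k₀)}, hk₀, ?_⟩
  intro m hm j hj
  simp only [Set.mem_setOf_eq, not_le] at hm hj
  calc dist (x m) (x j) ≤ dist (x m) (x k₀) + dist (x j) (x k₀) := dist_triangle_right _ _ _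
    _ < t/2 + t/2 := by linarith
    _ = t := by ring
end

section
/- Let A be a nonnegative regular summability matrix and (X,d) a metric space. If a sequence x = (x_k) in X is A-statistically Cauchy, then for every t > 0 there exists a set Q_t ⊆ ℕ with δ_A(Q_t) = 1 such that d(x_m, x_j) < t for all m, j ∈ Q_t. -/
open Filter Topology

theorem stmt8 {X : Type*} [MetricSpace X] {a : ℕ → ℕ → ℝ} (hA : IsRegularMatrix a)
    {x : ℕ → X} (h : AStatCauchy a x) :
    ∀ t > (0:ℝ), ∃ Q : Set ℕ, HasADensity a Q 1 ∧
      ∀ m ∈ Q, ∀ j ∈ Q, dist (x m) (x j) < t := by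
  obtain ⟨hpos, hsum, _, _, htot⟩ := hA
  intro t ht
  obtain ⟨k₀, hk₀⟩ := h (t/2) (by linarith)
  set Q : Set ℕ := {k | dist (x k) (x k₀) < t/2} with hQ
  refine ⟨Q, ?_, ?_⟩
  · have hcompl : Qᶜ = {k | t/2 ≤ dist (x k) (x k₀)} := by
      ext k; simp [hQ, not_lt]
    have key : ∀ n, ∑' k, Set.indicator Q (a n) k
        = (∑' k, a n k) - ∑' k, Set.indicator Qᶜ (a n) k := by
      intro n
      have h1 : Summable (Set.indicator Q (a n)) := (hsum n).indicator Q
      have h2 : Summable (Set.indicator Qᶜ (a n)) := (hsum n).indicator Qᶜ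
      have : (∑' k, Set.indicator Q (a n) k) + ∑' k, Set.indicator Qᶜ (a n) k
          = ∑' k, a n k := by
        rw [← Summable.tsum_add h1 h2]
        congr 1
        ext k
        simp [Set.indicator_self_add_compl Q (a n)]
      linarith
    have : Tendsto (fun n => (∑' k, a n k) - ∑' k, Set.indicator Qᶜ (a n) k)
        atTop (𝓝 1) := by
      have := htot.sub (hcompl ▸ hk₀)
      simpa using this
    exact this.congr fun n => (key n).symm
  · intro m hm j hj
    have hm' : dist (x m) (x k₀) < t/2 := hm
    have hj' : dist (x j) (x k₀) < t/2 := hj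
    calc dist (x m) (x j) ≤ dist (x m) (x k₀) + dist (x k₀) (x j) := dist_triangle _ _ _
      _ < t := by rw [dist_comm (x k₀)]; linarith
end

section
/- Let A be a nonnegative regular summability matrix and (X,d) a metric space. If x = (x_k) and y = (y_k) are two A-statistically Cauchy sequences in X, then the real sequence (d(x_k, y_k)) is an A-statistically Cauchy sequence in ℝ. -/
open Filter Topology

lemma density_zero_mono {a : ℕ → ℕ → ℝ} (h0 : ∀ n k, 0 ≤ a n k)
    (hs : ∀ n, Summable (a n)) {B C : Set ℕ} (hBC : B ⊆ C)
    (hC : HasADensity a C 0) : HasADensity a B 0 := by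
  refine squeeze_zero (fun n => tsum_nonneg fun k => Set.indicator_nonneg (fun k _ => h0 n k) k)
    (fun n => Summable.tsum_le_tsum (fun k => ?_) ((hs n).indicator B) ((hs n).indicator C)) hC
  by_cases hk : k ∈ B
  · rw [Set.indicator_of_mem hk, Set.indicator_of_mem (hBC hk)]
  · rw [Set.indicator_of_notMem hk]
    exact Set.indicator_nonneg (fun k _ => h0 n k) k

lemma density_zero_union {a : ℕ → ℕ → ℝ} (h0 : ∀ n k, 0 ≤ a n k)
    (hs : ∀ n, Summable (a n)) {B C : Set ℕ}
    (hB : HasADensity a B 0) (hC : HasADensity a C 0) : HasADensity a (B ∪ C) 0 := by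
  have h := hB.add hC
  rw [add_zero] at h
  refine squeeze_zero (fun n => tsum_nonneg fun k => Set.indicator_nonneg (fun k _ => h0 n k) k)
    (fun n => ?_) h
  calc ∑' k, Set.indicator (B ∪ C) (a n) k
      ≤ ∑' k, (Set.indicator B (a n) k + Set.indicator C (a n) k) := by
        refine Summable.tsum_le_tsum (fun k => ?_) ((hs n).indicator _)
          (((hs n).indicator B).add ((hs n).indicator C))
        by_cases hkB : k ∈ B
        · rw [Set.indicator_of_mem (Set.mem_union_left _ hkB), Set.indicator_of_mem hkB]
          exact le_add_of_nonneg_right (Set.indicator_nonneg (fun k _ => h0 n k) k)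
        · by_cases hkC : k ∈ C
          · rw [Set.indicator_of_mem (Set.mem_union_right _ hkC), Set.indicator_of_mem hkC]
            exact le_add_of_nonneg_left (Set.indicator_nonneg (fun k _ => h0 n k) k)
          · rw [Set.indicator_of_notMem (fun h => h.elim hkB hkC)]
            exact add_nonneg (Set.indicator_nonneg (fun k _ => h0 n k) k)
              (Set.indicator_nonneg (fun k _ => h0 n k) k)
    _ = _ := Summable.tsum_add ((hs n).indicator B) ((hs n).indicator C)

theorem stmt9 {X : Type*} [MetricSpace X] {a : ℕ → ℕ → ℝ} (hA : IsRegularMatrix a)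
    {x y : ℕ → X} (hx : AStatCauchy a x) (hy : AStatCauchy a y) :
    AStatCauchy a (fun k => dist (x k) (y k)) := by
  obtain ⟨h0, hs, _, _, hsum⟩ := hA
  intro ε hε
  obtain ⟨k₀, hk₀⟩ := hx (ε/4) (by linarith)
  obtain ⟨k₁, hk₁⟩ := hy (ε/4) (by linarith)
  set B : Set ℕ := {k | ε/4 ≤ dist (x k) (x k₀)} ∪ {k | ε/4 ≤ dist (y k) (y k₁)} with hBdef
  have hB : HasADensity a B 0 := density_zero_union h0 hs hk₀ hk₁
  -- find k₂ ∉ B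
  have hne : ∃ k₂, k₂ ∉ B := by
    by_contra h
    push_neg at h
    have : HasADensity a B 1 := by
      have : ∀ n, ∑' k, Set.indicator B (a n) k = ∑' k, a n k := by
        intro n
        exact tsum_congr fun k => Set.indicator_of_mem (h k) _
      simpa [HasADensity, this] using hsum
    exact one_ne_zero (tendsto_nhds_unique this hB)
  obtain ⟨k₂, hk₂⟩ := hne
  rw [hBdef, Set.mem_union] at hk₂
  push_neg at hk₂
  simp only [Set.mem_setOf_eq, not_le] at hk₂
  refine ⟨k₂, density_zero_mono h0 hs (fun k hk => ?_) hB⟩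
  simp only [Set.mem_setOf_eq] at hk
  rw [hBdef, Set.mem_union]
  by_contra hc
  push_neg at hc
  simp only [Set.mem_setOf_eq, not_le] at hc
  have h1 : |dist (x k) (y k) - dist (x k₂) (y k₂)| ≤
      dist (x k) (x k₂) + dist (y k) (y k₂) := by
    have := dist_dist_dist_le (x k) (y k) (x k₂) (y k₂)
    rwa [Real.dist_eq] at this
  have h2 : dist (x k) (x k₂) ≤ dist (x k) (x k₀) + dist (x k₂) (x k₀) :=
    dist_triangle_right _ _ _
  have h3 : dist (y k) (y k₂) ≤ dist (y k) (y k₁) + dist (y k₂) (y k₁) :=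
    dist_triangle_right _ _ _
  have := hk
  rw [Real.dist_eq] at this
  linarith [hc.1, hc.2, hk₂.1, hk₂.2]
end

section
/- Let A be a nonnegative regular summability matrix, (X,d) a metric space, and x = (x_k) a sequence in X. Then the set Γ_x^A of A-statistical cluster points of x is a closed subset of X. -/
open Filter Topology

lemma hasADensity_zero_mono {a : ℕ → ℕ → ℝ} (hnn : ∀ n k, 0 ≤ a n k)
    (hsum : ∀ n, Summable (a n)) {B C : Set ℕ} (hBC : B ⊆ C)
    (hC : HasADensity a C 0) : HasADensity a B 0 := by
  refine squeeze_zero (fun n => tsum_nonneg fun k => Set.indicator_nonneg (fun i _ => hnn n i) k)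
    (fun n => ?_) hC
  exact Summable.tsum_le_tsum
    (fun k => Set.indicator_le_indicator_of_subset hBC (fun i => hnn n i) k)
    ((hsum n).indicator B) ((hsum n).indicator C)

theorem stmt13 {X : Type*} [MetricSpace X] {a : ℕ → ℕ → ℝ} (hA : IsRegularMatrix a)
    (x : ℕ → X) :
    IsClosed {p | AStatClusterPt a x p} := by
  obtain ⟨hnn, hsum, -, -, -⟩ := hA
  rw [← isOpen_compl_iff, Metric.isOpen_iff]
  intro p hp
  simp only [Set.mem_compl_iff, Set.mem_setOf_eq, AStatClusterPt, not_forall] at hp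
  obtain ⟨ε, hε, hd⟩ := hp
  rw [not_not] at hd
  refine ⟨ε / 2, by positivity, fun q hq => ?_⟩
  simp only [Set.mem_compl_iff, Set.mem_setOf_eq, AStatClusterPt, not_forall]
  refine ⟨ε / 2, by positivity, not_not.mpr ?_⟩
  refine hasADensity_zero_mono hnn hsum (fun k hk => ?_) hd
  simp only [Set.mem_setOf_eq] at hk ⊢
  calc dist (x k) p ≤ dist (x k) q + dist q p := dist_triangle _ _ _
    _ < ε / 2 + ε / 2 := add_lt_add hk (Metric.mem_ball.mp hq)
    _ = ε := by ring
end

section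
/- Let A be a nonnegative regular summability matrix, (X,d) a metric space, and x = (x_k) a sequence in X that is A-statistically bounded, i.e., there exists a compact subset C of X such that δ_A({k ∈ ℕ : x_k ∉ C}) = 0. Then the set Γ_x^A of A-statistical cluster points of x is nonempty and compact; moreover Γ_x^A ⊆ C. -/
open Filter Topology

/-!
Sets of `A`-density zero are closed under subsets and finite unions, and by regularity `ℕ` is
not among them, so their complements form a proper filter on `ℕ`, the `A`-statistical filter.
The `A`-statistical cluster points of `x` are exactly the cluster points of `x` along this
filter, and statistical boundedness says that `x` eventually lies in `C` along it. The theorem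
is then general topology: a compact set met eventually by a map along a proper filter contains a
cluster point of it, every cluster point lies in the closed set `C`, and the set of cluster
points of a filter is closed.
-/

open Set

theorem hasADensity_empty (a : ℕ → ℕ → ℝ) : HasADensity a ∅ 0 := by
  simp only [HasADensity, indicator_empty, tsum_zero, tendsto_const_nhds]

theorem HasADensity.zero_of_subset {a : ℕ → ℕ → ℝ} (ha : ∀ n k, 0 ≤ a n k)
    (hs : ∀ n, Summable (a n)) {B B' : Set ℕ} (h : B ⊆ B') (hB' : HasADensity a B' 0) :
    HasADensity a B 0 :=
  squeeze_zero (fun n => tsum_nonneg fun k => indicator_nonneg (fun k _ => ha n k) k)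
    (fun n => ((hs n).indicator B).tsum_le_tsum
      (fun k => indicator_le_indicator_of_subset h (ha n) k) ((hs n).indicator B')) hB'

theorem HasADensity.zero_union {a : ℕ → ℕ → ℝ} (ha : ∀ n k, 0 ≤ a n k)
    (hs : ∀ n, Summable (a n)) {B B' : Set ℕ} (hB : HasADensity a B 0)
    (hB' : HasADensity a B' 0) : HasADensity a (B ∪ B') 0 := by
  have hle : ∀ n k, (B ∪ B').indicator (a n) k ≤ B.indicator (a n) k + B'.indicator (a n) k :=
    fun n k => by
      rw [← indicator_union_add_inter_apply]
      exact le_add_of_nonneg_right (indicator_nonneg (fun k _ => ha n k) k)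
  refine squeeze_zero (fun n => tsum_nonneg fun k => indicator_nonneg (fun k _ => ha n k) k)
    (fun n => ?_) (by simpa using hB.add hB')
  rw [← ((hs n).indicator B).tsum_add ((hs n).indicator B')]
  exact ((hs n).indicator _).tsum_le_tsum (hle n) (((hs n).indicator B).add ((hs n).indicator B'))

theorem not_hasADensity_univ_zero {a : ℕ → ℕ → ℝ} (hA : IsRegularMatrix a) :
    ¬ HasADensity a univ 0 := fun h => by
  simp only [HasADensity, indicator_univ] at h
  exact one_ne_zero (tendsto_nhds_unique hA.2.2.2.2 h)

def aStatFilter (a : ℕ → ℕ → ℝ) (ha : ∀ n k, 0 ≤ a n k) (hs : ∀ n, Summable (a n)) :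
    Filter ℕ :=
  comk (fun B => HasADensity a B 0) (hasADensity_empty a)
    (fun _ hB' _ h => hB'.zero_of_subset ha hs h) (fun _ hB _ hB' => hB.zero_union ha hs hB')

theorem aStatFilter_neBot {a : ℕ → ℕ → ℝ} (hA : IsRegularMatrix a) :
    NeBot (aStatFilter a hA.1 hA.2.1) :=
  ⟨fun h => not_hasADensity_univ_zero hA <| by
    simpa [aStatFilter] using (empty_mem_iff_bot.2 h)⟩

theorem aStatClusterPt_iff_mapClusterPt {X : Type*} [MetricSpace X] {a : ℕ → ℕ → ℝ}
    (ha : ∀ n k, 0 ≤ a n k) (hs : ∀ n, Summable (a n)) {x : ℕ → X} {p : X} :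
    AStatClusterPt a x p ↔ MapClusterPt p (aStatFilter a ha hs) x := by
  simp [Metric.nhds_basis_ball.mapClusterPt_iff_frequently, AStatClusterPt, Filter.Frequently,
    Filter.Eventually, aStatFilter, compl_ofPred]

theorem stmt16 {X : Type*} [MetricSpace X] {a : ℕ → ℕ → ℝ} (hA : IsRegularMatrix a)
    {x : ℕ → X} {C : Set X} (hC : IsCompact C)
    (hbd : HasADensity a {k | x k ∉ C} 0) :
    ({p | AStatClusterPt a x p}).Nonempty ∧ IsCompact {p | AStatClusterPt a x p} ∧
    {p | AStatClusterPt a x p} ⊆ C := by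
  have := aStatFilter_neBot hA
  have hΓ : {p | AStatClusterPt a x p} = {p | MapClusterPt p (aStatFilter a hA.1 hA.2.1) x} :=
    ext fun _ => aStatClusterPt_iff_mapClusterPt hA.1 hA.2.1
  have hxC : ∀ᶠ k in aStatFilter a hA.1 hA.2.1, x k ∈ C := hbd
  have hsub : {p | MapClusterPt p (aStatFilter a hA.1 hA.2.1) x} ⊆ C :=
    fun _ hp => hC.isClosed.mem_of_mapClusterPt hp hxC
  obtain ⟨p, -, hp⟩ := hC.exists_mapClusterPt_of_frequently hxC.frequently
  rw [hΓ]
  exact ⟨⟨p, hp⟩, hC.of_isClosed_subset isClosed_setOfPred_clusterPt hsub, hsub⟩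
end
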